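/- arXiv:1506.03761 — 3 statements merged into one kernel-verified Lean document; each statement's English description precedes it below -/
import Mathlib

section
/- Let γ ∈ ℝ, κ(x) = tanh(x/√2), and let ζ_n(x) = 1 + (γ|x|/2) e^{-n x²} for n ≥ 1. For any u : ℝ → ℂ which is H¹_loc, H² away from 0, with u'(0⁺) = u'(0⁻), the function ζ_n u satisfies the jump condition (ζ_n u)'(0⁺) - (ζ_n u)'(0⁻) = γ (ζ_n u)(0); moreover ‖ζ_n - 1‖_{L^∞} → 0, ‖ζ_n'‖_{L²} → 0 and ‖1 - |ζ_n|²‖_{L²} → 0 as n → ∞. -/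
open MeasureTheory Filter Topology

/-- The cutoff-correction functions `ζ_n(x) = 1 + (γ|x|/2) e^{-n x²}`. -/
noncomputable def zeta (γ : ℝ) (n : ℕ) (x : ℝ) : ℝ :=
  1 + (γ * |x| / 2) * Real.exp (-(n : ℝ) * x ^ 2)

/-! On `x > 0` the function `ζ_n` agrees with the smooth function `zetaBranch γ n`, and on
`x < 0` with `zetaBranch (-γ) n`; both take the value `1` at `0`, with slopes `±γ/2` there. By
the product rule the one-sided limits of `(ζ_n u)'` at `0` are `±(γ/2) u(0) + a`, where `a` is
the common limit of `u'`, and their difference is `γ u(0)`.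

For the norms, `|ζ_n - 1| = (|γ|/2) |x| e^{-n x²} ≤ |γ| / (4√n)` uniformly in `x`. For `n ≥ 1`,
`|ζ_n'|` and `|1 - ζ_n²|` are bounded by multiples of the Gaussian `e^{-x²/2}` and tend to `0`
off `x = 0`, so dominated convergence gives the `L²` limits. -/

open Set
open scoped ENNReal

theorem tendsto_eLpNorm_of_dominated_convergence {α E : Type*} [MeasurableSpace α]
    [NormedAddCommGroup E] {μ : Measure α} {p : ℝ≥0∞} (hp₀ : p ≠ 0) (hp : p ≠ ∞)
    {f : ℕ → α → E} {g : α → ℝ} (hf : ∀ n, AEStronglyMeasurable (f n) μ) (hg : MemLp g p μ)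
    (hfg : ∀ᶠ n in atTop, ∀ᵐ x ∂μ, ‖f n x‖ ≤ g x)
    (hlim : ∀ᵐ x ∂μ, Tendsto (fun n => f n x) atTop (𝓝 0)) :
    Tendsto (fun n => eLpNorm (f n) p μ) atTop (𝓝 0) := by
  have hp' : 0 < p.toReal := ENNReal.toReal_pos hp₀ hp
  have hpow (y : ℝ) : Continuous fun z : ℝ≥0∞ => z ^ y := ENNReal.continuous_rpow_const
  simp_rw [eLpNorm_eq_lintegral_rpow_enorm_toReal hp₀ hp]
  have hint : Tendsto (fun n => ∫⁻ x, ‖f n x‖ₑ ^ p.toReal ∂μ) atTop (𝓝 0) := by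
    simpa [hp'] using tendsto_lintegral_filter_of_dominated_convergence' (f := fun _ => 0)
      (fun x => ‖g x‖ₑ ^ p.toReal) (Eventually.of_forall fun n => (hf n).enorm.pow_const _)
      (hfg.mono fun n hn => hn.mono fun x hx => by
        gcongr; exact enorm_le_iff_norm_le.2 (hx.trans (Real.le_norm_self _)))
      (lintegral_rpow_enorm_lt_top_of_eLpNorm_lt_top hp₀ hp hg.2).ne
      (hlim.mono fun x hx => by
        simpa [hp', Function.comp_def] using
          ((hpow p.toReal).tendsto _).comp ((continuous_enorm.tendsto 0).comp hx))
  simpa [hp', Function.comp_def] using ((hpow (1 / p.toReal)).tendsto 0).comp hint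

theorem tendsto_deriv_ofReal_mul_nhdsWithin {s : Set ℝ} (hs : IsOpen s) {x₀ : ℝ} {ζ φ : ℝ → ℝ}
    {u : ℝ → ℂ} (hζ : EqOn ζ φ s) (hφ : ContDiff ℝ 1 φ) (hu : DifferentiableOn ℝ u s)
    (hu₀ : ContinuousAt u x₀) {a : ℂ} (ha : Tendsto (deriv u) (𝓝[s] x₀) (𝓝 a)) :
    Tendsto (deriv fun x => (ζ x : ℂ) * u x) (𝓝[s] x₀) (𝓝 (deriv φ x₀ * u x₀ + φ x₀ * a)) := by
  have hderiv : ∀ x ∈ s,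
      deriv (fun x => (ζ x : ℂ) * u x) x = deriv φ x * u x + φ x * deriv u x := by
    intro x hx
    have heq : (fun x => (ζ x : ℂ) * u x) =ᶠ[𝓝 x] fun x => (φ x : ℂ) * u x :=
      mem_of_superset (hs.mem_nhds hx) fun y hy => by simp [hζ hy]
    rw [heq.deriv_eq]
    exact ((hφ.differentiable one_ne_zero x).hasDerivAt.ofReal_comp.mul
      (hu.differentiableAt (hs.mem_nhds hx)).hasDerivAt).deriv
  have hφ' : Continuous fun x => ((deriv φ x : ℝ) : ℂ) :=
    Complex.continuous_ofReal.comp (hφ.continuous_deriv le_rfl)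
  have hφ₀ : Continuous fun x => ((φ x : ℝ) : ℂ) := Complex.continuous_ofReal.comp hφ.continuous
  refine Tendsto.congr' (eventually_nhdsWithin_of_forall fun x hx => (hderiv x hx).symm) ?_
  exact ((hφ'.continuousAt.mul hu₀).tendsto.mono_left nhdsWithin_le_nhds).add
    ((hφ₀.tendsto x₀).mono_left nhdsWithin_le_nhds |>.mul ha)

theorem abs_mul_exp_neg_mul_sq_le {c : ℝ} (hc : 0 < c) (x : ℝ) :
    |x| * Real.exp (-c * x ^ 2) ≤ 1 / (2 * √c) := by
  have hs : (√c * |x|) ^ 2 = c * x ^ 2 := by rw [mul_pow, Real.sq_sqrt hc.le, sq_abs]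
  have h : 2 * (√c * |x|) ≤ Real.exp (c * x ^ 2) := by
    nlinarith [Real.add_one_le_exp (c * x ^ 2), sq_nonneg (√c * |x| - 1)]
  rw [neg_mul, Real.exp_neg, le_div_iff₀ (by positivity)]
  calc |x| * (Real.exp (c * x ^ 2))⁻¹ * (2 * √c)
      = 2 * (√c * |x|) * (Real.exp (c * x ^ 2))⁻¹ := by ring
    _ ≤ Real.exp (c * x ^ 2) * (Real.exp (c * x ^ 2))⁻¹ := by gcongr
    _ = 1 := mul_inv_cancel₀ (Real.exp_pos _).ne'

theorem abs_mul_exp_neg_mul_sq_le_exp {c : ℝ} (hc : 1 ≤ c) (x : ℝ) :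
    |x| * Real.exp (-c * x ^ 2) ≤ Real.exp (-x ^ 2 / 2) := by
  have h : |x| ≤ Real.exp (x ^ 2 / 2) := by
    nlinarith [Real.add_one_le_exp (x ^ 2 / 2), sq_nonneg (|x| - 1), sq_abs x]
  calc |x| * Real.exp (-c * x ^ 2) ≤ Real.exp (x ^ 2 / 2) * Real.exp (-c * x ^ 2) := by gcongr
    _ = Real.exp (x ^ 2 / 2 - c * x ^ 2) := by rw [← Real.exp_add]; ring_nf
    _ ≤ Real.exp (-x ^ 2 / 2) := by gcongr; nlinarith [sq_nonneg x]

theorem one_add_two_mul_mul_exp_neg_le (t : ℝ) :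
    (1 + 2 * t) * Real.exp (-t) ≤ 4 * Real.exp (-(t / 2)) := by
  have h : 1 + 2 * t ≤ 4 * Real.exp (t / 2) := by linarith [Real.add_one_le_exp (t / 2)]
  calc (1 + 2 * t) * Real.exp (-t) ≤ 4 * Real.exp (t / 2) * Real.exp (-t) := by gcongr
    _ = 4 * Real.exp (-(t / 2)) := by rw [mul_assoc, ← Real.exp_add]; ring_nf

theorem memLp_two_exp_neg_sq_div_two : MemLp (fun x : ℝ => Real.exp (-x ^ 2 / 2)) 2 volume := by
  refine (memLp_two_iff_integrable_sq (by fun_prop)).2 ((integrable_exp_neg_mul_sq one_pos).congr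
    (ae_of_all _ fun x => ?_))
  dsimp only
  rw [← Real.exp_nat_mul]; ring_nf

theorem tendsto_exp_neg_nat_mul_div_two {c : ℝ} (hc : 0 < c) :
    Tendsto (fun n : ℕ => Real.exp (-(n * c / 2))) atTop (𝓝 0) :=
  Real.tendsto_exp_neg_atTop_nhds_zero.comp
    ((tendsto_natCast_atTop_atTop.atTop_mul_const hc).atTop_div_const two_pos)

theorem tendsto_div_sqrt_natCast_atTop (c : ℝ) : Tendsto (fun n : ℕ => c / √n) atTop (𝓝 0) :=
  tendsto_const_nhds.div_atTop (Real.tendsto_sqrt_atTop.comp tendsto_natCast_atTop_atTop)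

noncomputable def zetaBranch (γ : ℝ) (n : ℕ) (x : ℝ) : ℝ :=
  1 + (γ * x / 2) * Real.exp (-(n : ℝ) * x ^ 2)

section
variable (γ : ℝ) (n : ℕ)

theorem zetaBranch_zero : zetaBranch γ n 0 = 1 := by simp [zetaBranch]

theorem contDiff_zetaBranch : ContDiff ℝ 1 (zetaBranch γ n) := by
  unfold zetaBranch; fun_prop

theorem hasDerivAt_zetaBranch (x : ℝ) :
    HasDerivAt (zetaBranch γ n) (γ / 2 * Real.exp (-(n : ℝ) * x ^ 2) * (1 - 2 * n * x ^ 2)) x := by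
  have h := ((((hasDerivAt_id' x).const_mul γ).div_const 2).mul
    (((hasDerivAt_pow 2 x).const_mul (-(n : ℝ))).exp)).const_add 1
  exact h.congr_deriv (by simp; ring)

theorem deriv_zetaBranch_zero : deriv (zetaBranch γ n) 0 = γ / 2 := by
  simp [(hasDerivAt_zetaBranch γ n 0).deriv]

theorem zeta_eqOn_Ioi : EqOn (zeta γ n) (zetaBranch γ n) (Ioi 0) := fun x hx => by
  simp [zeta, zetaBranch, abs_of_pos (mem_Ioi.1 hx)]

theorem zeta_eqOn_Iio : EqOn (zeta γ n) (zetaBranch (-γ) n) (Iio 0) := fun x hx => by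
  simp [zeta, zetaBranch, abs_of_neg (mem_Iio.1 hx)]

theorem zeta_zero : zeta γ n 0 = 1 := by simp [zeta]

theorem continuous_zeta : Continuous (zeta γ n) := by
  unfold zeta; fun_prop

theorem tendsto_deriv_zeta_mul_nhdsGT {u : ℝ → ℂ} (hu : Continuous u)
    (hdu : DifferentiableOn ℝ u {x | x ≠ 0}) {a : ℂ} (ha : Tendsto (deriv u) (𝓝[>] 0) (𝓝 a)) :
    Tendsto (deriv fun x => (zeta γ n x : ℂ) * u x) (𝓝[>] 0) (𝓝 (γ / 2 * u 0 + a)) := by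
  simpa [deriv_zetaBranch_zero, zetaBranch_zero] using
    tendsto_deriv_ofReal_mul_nhdsWithin isOpen_Ioi (zeta_eqOn_Ioi γ n) (contDiff_zetaBranch γ n)
      (hdu.mono fun x hx => ne_of_gt hx) hu.continuousAt ha

theorem tendsto_deriv_zeta_mul_nhdsLT {u : ℝ → ℂ} (hu : Continuous u)
    (hdu : DifferentiableOn ℝ u {x | x ≠ 0}) {a : ℂ} (ha : Tendsto (deriv u) (𝓝[<] 0) (𝓝 a)) :
    Tendsto (deriv fun x => (zeta γ n x : ℂ) * u x) (𝓝[<] 0) (𝓝 (-γ / 2 * u 0 + a)) := by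
  simpa [deriv_zetaBranch_zero, zetaBranch_zero] using
    tendsto_deriv_ofReal_mul_nhdsWithin isOpen_Iio (zeta_eqOn_Iio γ n) (contDiff_zetaBranch (-γ) n)
      (hdu.mono fun x hx => ne_of_lt hx) hu.continuousAt ha

theorem abs_zeta_sub_one (x : ℝ) :
    |zeta γ n x - 1| = |γ| / 2 * (|x| * Real.exp (-(n : ℝ) * x ^ 2)) := by
  simp [zeta, abs_mul, abs_div]; ring

theorem abs_deriv_zeta_le {x : ℝ} (hx : x ≠ 0) :
    |deriv (zeta γ n) x| ≤ 2 * |γ| * Real.exp (-(n * x ^ 2 / 2)) := by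
  obtain ⟨σ, hσ, hderiv⟩ : ∃ σ : ℝ, |σ| = |γ| ∧ deriv (zeta γ n) x = deriv (zetaBranch σ n) x := by
    rcases hx.lt_or_gt with hneg | hpos
    · exact ⟨-γ, abs_neg γ,
        ((zeta_eqOn_Iio γ n).eventuallyEq_of_mem (Iio_mem_nhds hneg)).deriv_eq⟩
    · exact ⟨γ, rfl, ((zeta_eqOn_Ioi γ n).eventuallyEq_of_mem (Ioi_mem_nhds hpos)).deriv_eq⟩
  rw [hderiv, (hasDerivAt_zetaBranch σ n x).deriv, abs_mul, abs_mul, abs_div, hσ,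
    abs_of_pos (Real.exp_pos _), abs_two, neg_mul]
  calc |γ| / 2 * Real.exp (-(n * x ^ 2)) * |1 - 2 * n * x ^ 2|
      ≤ |γ| / 2 * ((1 + 2 * (n * x ^ 2)) * Real.exp (-(n * x ^ 2))) := by
        rw [mul_assoc, mul_comm (Real.exp _)]
        gcongr
        exact abs_le.2 ⟨by nlinarith, by nlinarith⟩
    _ ≤ |γ| / 2 * (4 * Real.exp (-(n * x ^ 2 / 2))) :=
        mul_le_mul_of_nonneg_left (one_add_two_mul_mul_exp_neg_le _) (by positivity)
    _ = 2 * |γ| * Real.exp (-(n * x ^ 2 / 2)) := by ring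

end

section
variable (γ : ℝ)

theorem abs_zeta_sub_one_le {n : ℕ} (hn : n ≠ 0) (x : ℝ) :
    |zeta γ n x - 1| ≤ |γ| / 4 / √n := by
  rw [abs_zeta_sub_one]
  calc |γ| / 2 * (|x| * Real.exp (-(n : ℝ) * x ^ 2)) ≤ |γ| / 2 * (1 / (2 * √n)) := by
        gcongr; exact abs_mul_exp_neg_mul_sq_le (by positivity) x
    _ = |γ| / 4 / √n := by ring

theorem abs_zeta_sub_one_le_exp {n : ℕ} (hn : 1 ≤ n) (x : ℝ) :
    |zeta γ n x - 1| ≤ |γ| / 2 * Real.exp (-x ^ 2 / 2) := by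
  rw [abs_zeta_sub_one]
  gcongr
  exact abs_mul_exp_neg_mul_sq_le_exp (by exact_mod_cast hn) x

theorem tendsto_zeta_atTop (x : ℝ) : Tendsto (fun n => zeta γ n x) atTop (𝓝 1) := by
  refine tendsto_iff_norm_sub_tendsto_zero.2
    (squeeze_zero' (by simp) ?_ (tendsto_div_sqrt_natCast_atTop (|γ| / 4)))
  filter_upwards [eventually_ne_atTop 0] with n hn
  exact abs_zeta_sub_one_le γ hn x

theorem tendsto_eLpNorm_top_zeta_sub_one :
    Tendsto (fun n : ℕ => eLpNorm (fun x => zeta γ n x - 1) ⊤ volume) atTop (𝓝 0) := by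
  have hbound := ENNReal.tendsto_ofReal (tendsto_div_sqrt_natCast_atTop (|γ| / 4))
  rw [ENNReal.ofReal_zero] at hbound
  refine tendsto_of_tendsto_of_tendsto_of_le_of_le' tendsto_const_nhds hbound
    (Eventually.of_forall fun _ => zero_le) ?_
  filter_upwards [eventually_ne_atTop 0] with n hn
  rw [eLpNorm_exponent_top]
  exact eLpNormEssSup_le_of_ae_bound (ae_of_all _ fun x => abs_zeta_sub_one_le γ hn x)

theorem tendsto_eLpNorm_deriv_zeta :
    Tendsto (fun n : ℕ => eLpNorm (deriv (zeta γ n)) 2 volume) atTop (𝓝 0) := by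
  refine tendsto_eLpNorm_of_dominated_convergence two_ne_zero ENNReal.ofNat_ne_top
    (fun n => (measurable_deriv _).aestronglyMeasurable)
    (memLp_two_exp_neg_sq_div_two.const_mul (2 * |γ|)) ?_ ?_
  · filter_upwards [eventually_ge_atTop 1] with n hn
    filter_upwards [Measure.ae_ne volume 0] with x hx
    have hn' : (1 : ℝ) ≤ n := by exact_mod_cast hn
    refine (abs_deriv_zeta_le γ n hx).trans ?_
    gcongr
    nlinarith [sq_nonneg x]
  · filter_upwards [Measure.ae_ne volume 0] with x hx
    refine squeeze_zero_norm (fun n => abs_deriv_zeta_le γ n hx) ?_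
    simpa using (tendsto_exp_neg_nat_mul_div_two (by positivity)).const_mul (2 * |γ|)

theorem tendsto_eLpNorm_one_sub_zeta_sq :
    Tendsto (fun n : ℕ => eLpNorm (fun x => 1 - zeta γ n x ^ 2) 2 volume) atTop (𝓝 0) := by
  refine tendsto_eLpNorm_of_dominated_convergence two_ne_zero ENNReal.ofNat_ne_top
    (fun n => (continuous_const.sub ((continuous_zeta γ n).pow 2)).aestronglyMeasurable)
    (memLp_two_exp_neg_sq_div_two.const_mul (|γ| / 2 * (|γ| / 2 + 2))) ?_
    (ae_of_all _ fun x => by simpa using ((tendsto_zeta_atTop γ x).pow 2).const_sub 1)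
  filter_upwards [eventually_ge_atTop 1] with n hn
  refine ae_of_all _ fun x => ?_
  have h := abs_zeta_sub_one_le_exp γ hn x
  have hexp : Real.exp (-x ^ 2 / 2) ≤ 1 := Real.exp_le_one_iff.2 (by nlinarith [sq_nonneg x])
  have hle : |zeta γ n x - 1| ≤ |γ| / 2 := h.trans (mul_le_of_le_one_right (by positivity) hexp)
  calc ‖1 - zeta γ n x ^ 2‖ = |zeta γ n x - 1| * |zeta γ n x - 1 + 2| := by
        rw [Real.norm_eq_abs, ← abs_mul, ← abs_neg]; ring_nf
    _ ≤ |zeta γ n x - 1| * (|zeta γ n x - 1| + 2) := by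
        gcongr; exact (abs_add_le _ _).trans_eq (by norm_num)
    _ ≤ |γ| / 2 * Real.exp (-x ^ 2 / 2) * (|γ| / 2 + 2) := by gcongr
    _ = |γ| / 2 * (|γ| / 2 + 2) * Real.exp (-x ^ 2 / 2) := by ring

end

/-- Multiplication by `ζ_n` produces the jump condition `(ζ_n u)'(0⁺) - (ζ_n u)'(0⁻) = γ (ζ_n u)(0)`
for any `u` smooth away from `0` whose derivative has equal one-sided limits at `0`; moreover
`‖ζ_n - 1‖_{L∞} → 0`, `‖ζ_n'‖_{L²} → 0` and `‖1-|ζ_n|²‖_{L²} → 0` as `n → ∞`. -/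
theorem zeta_jump_and_limits (γ : ℝ) :
    (∀ n : ℕ, 1 ≤ n → ∀ u : ℝ → ℂ, Continuous u →
      DifferentiableOn ℝ u {x : ℝ | x ≠ 0} →
      DifferentiableOn ℝ (deriv u) {x : ℝ | x ≠ 0} →
      ∀ a : ℂ, Tendsto (deriv u) (𝓝[>] (0:ℝ)) (𝓝 a) →
        Tendsto (deriv u) (𝓝[<] (0:ℝ)) (𝓝 a) →
      ∃ dp dm : ℂ,
        Tendsto (deriv (fun x => ((zeta γ n x : ℝ) : ℂ) * u x)) (𝓝[>] (0:ℝ)) (𝓝 dp) ∧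
        Tendsto (deriv (fun x => ((zeta γ n x : ℝ) : ℂ) * u x)) (𝓝[<] (0:ℝ)) (𝓝 dm) ∧
        dp - dm = (γ : ℂ) * (((zeta γ n 0 : ℝ) : ℂ) * u 0)) ∧
    Tendsto (fun n : ℕ => eLpNorm (fun x => zeta γ n x - 1) ⊤ (volume : Measure ℝ))
      atTop (𝓝 0) ∧
    Tendsto (fun n : ℕ => eLpNorm (deriv (zeta γ n)) 2 (volume : Measure ℝ))
      atTop (𝓝 0) ∧
    Tendsto (fun n : ℕ => eLpNorm (fun x => 1 - (zeta γ n x) ^ 2) 2 (volume : Measure ℝ))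
      atTop (𝓝 0) := by
  refine ⟨fun n _ u hu hdu _ a hap ham => ?_, tendsto_eLpNorm_top_zeta_sub_one γ,
    tendsto_eLpNorm_deriv_zeta γ, tendsto_eLpNorm_one_sub_zeta_sq γ⟩
  refine ⟨_, _, tendsto_deriv_zeta_mul_nhdsGT γ n hu hdu hap,
    tendsto_deriv_zeta_mul_nhdsLT γ n hu hdu ham, ?_⟩
  rw [zeta_zero]
  push_cast
  ring
end

section
/- Let γ ≠ 0 and c_γ = (1/√2) sinh⁻¹(-2√2/γ). Then the function b_γ(x) = tanh((|x| - c_γ)/√2) satisfies the jump condition b_γ'(0⁺) - b_γ'(0⁻) = γ b_γ(0). -/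
/-!
Away from `0` the function `b_γ = f ∘ |·|`, with `f x = tanh ((x - c_γ)/√2)`, is smooth, so its
one-sided derivatives at `0` are `± f'(0)` and the jump is `2 f'(0) = √2 / cosh² (c_γ/√2)`.
Writing `u = √2 c_γ`, so that `γ sinh u = -2√2`, the half-angle identity
`sinh u = 2 tanh (u/2) cosh² (u/2)` turns this into `γ tanh (-c_γ/√2) = γ b_γ(0)`.
-/

open Filter Topology Real

theorem Real.hasDerivAt_tanh (x : ℝ) : HasDerivAt tanh (1 / cosh x ^ 2) x := by
  have hquot := (hasDerivAt_sinh x).div (hasDerivAt_cosh x) (cosh_pos x).ne'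
  rw [← sq, ← sq, cosh_sq_sub_sinh_sq] at hquot
  exact hquot.congr_of_eventuallyEq (.of_eq (funext tanh_eq_sinh_div_cosh))

theorem Real.sinh_eq_two_mul_tanh_half_mul_cosh_half_sq (x : ℝ) :
    sinh x = 2 * tanh (x / 2) * cosh (x / 2) ^ 2 := by
  conv_lhs => rw [← mul_div_cancel₀ x two_ne_zero, sinh_two_mul]
  rw [tanh_eq_sinh_div_cosh]
  field_simp [(cosh_pos (x / 2)).ne']

section AbsComp

variable {f f' : ℝ → ℝ} {L : ℝ}

theorem tendsto_deriv_comp_abs_nhdsGT (hf : ∀ x > 0, HasDerivAt f (f' x) x)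
    (hf' : Tendsto f' (𝓝[>] 0) (𝓝 L)) :
    Tendsto (deriv fun x => f |x|) (𝓝[>] 0) (𝓝 L) := by
  refine hf'.congr' ?_
  filter_upwards [self_mem_nhdsWithin] with x (hx : 0 < x)
  have hloc : (fun y => f |y|) =ᶠ[𝓝 x] f := by
    filter_upwards [Ioi_mem_nhds hx] with y (hy : 0 < y)
    rw [abs_of_pos hy]
  rw [hloc.deriv_eq, (hf x hx).deriv]

theorem tendsto_deriv_comp_abs_nhdsLT (hf : ∀ x > 0, HasDerivAt f (f' x) x)
    (hf' : Tendsto f' (𝓝[>] 0) (𝓝 L)) :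
    Tendsto (deriv fun x => f |x|) (𝓝[<] 0) (𝓝 (-L)) := by
  have hneg : Tendsto (fun x => -f' (-x)) (𝓝[<] 0) (𝓝 (-L)) :=
    (hf'.comp (by simpa using tendsto_neg_nhdsLT (a := (0 : ℝ)))).neg
  refine hneg.congr' ?_
  filter_upwards [self_mem_nhdsWithin] with x (hx : x < 0)
  have hloc : (fun y => f |y|) =ᶠ[𝓝 x] fun y => f (-y) := by
    filter_upwards [Iio_mem_nhds hx] with y (hy : y < 0)
    rw [abs_of_neg hy]
  rw [hloc.deriv_eq, deriv_comp_neg, (hf (-x) (neg_pos.mpr hx)).deriv]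

end AbsComp

/-- For `γ ≠ 0` and `c_γ = (1/√2) arsinh(-2√2/γ)`, the soliton
`b_γ(x) = tanh((|x| - c_γ)/√2)` satisfies the jump condition
`b_γ'(0⁺) - b_γ'(0⁻) = γ b_γ(0)`. -/
theorem b_gamma_jump (γ : ℝ) (hγ : γ ≠ 0) :
    let cγ : ℝ := (1 / Real.sqrt 2) * Real.arsinh (-(2 * Real.sqrt 2) / γ)
    let b : ℝ → ℝ := fun x => Real.tanh ((|x| - cγ) / Real.sqrt 2)
    ∃ dp dm : ℝ,
      Tendsto (deriv b) (𝓝[>] (0:ℝ)) (𝓝 dp) ∧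
      Tendsto (deriv b) (𝓝[<] (0:ℝ)) (𝓝 dm) ∧
      dp - dm = γ * b 0 := by
  intro cγ b
  set u := arsinh (-(2 * √2) / γ)
  have hcu : cγ / √2 = u / 2 := by
    show 1 / √2 * u / √2 = u / 2
    rw [one_div_mul_eq_div, div_div, mul_self_sqrt zero_le_two]
  set f' : ℝ → ℝ := fun x => 1 / cosh ((x - cγ) / √2) ^ 2 * (√2)⁻¹
  have hf (x : ℝ) : HasDerivAt (fun x => tanh ((x - cγ) / √2)) (f' x) x :=
    (hasDerivAt_tanh _).comp x (by simpa using ((hasDerivAt_id x).sub_const cγ).div_const √2)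
  have hf' : Tendsto f' (𝓝[>] 0) (𝓝 (f' 0)) :=
    Continuous.continuousWithinAt (by fun_prop (disch := exact fun x => by positivity))
  refine ⟨f' 0, -f' 0, tendsto_deriv_comp_abs_nhdsGT (fun x _ => hf x) hf',
    tendsto_deriv_comp_abs_nhdsLT (fun x _ => hf x) hf', ?_⟩
  have hsinh : γ * sinh u = -(2 * √2) := by
    rw [sinh_arsinh]
    field_simp
  rw [sinh_eq_two_mul_tanh_half_mul_cosh_half_sq] at hsinh
  simp only [f', b, abs_zero, zero_sub, neg_div, hcu, cosh_neg, tanh_neg]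
  field_simp
  linear_combination √2 / 2 * hsinh - sq_sqrt (zero_le_two (α := ℝ))
end

section
/- Let γ < 0 and c_γ = (1/√2) sinh⁻¹(-2√2/γ) > 0. Then the function b̃_γ(x) = coth((|x| + c_γ)/√2) satisfies the jump condition b̃_γ'(0⁺) - b̃_γ'(0⁻) = γ b̃_γ(0). -/
open Filter Topology

/-!
Away from `0` the function is a translate of `coth`, whose derivative is `-1 / sinh²`, and it is
even, so its one-sided derivatives at `0` are `∓ 1 / (√2 sinh² t)` with `t = c_γ / √2`; the jump is
`-√2 / sinh² t`. The choice of `c_γ` means exactly `sinh (2t) = -2√2 / γ`, i.e.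
`γ sinh t cosh t = -√2`, which turns the jump into `γ coth t = γ b̃_γ(0)`.
-/

/-- The hyperbolic cotangent. -/
noncomputable def Real.coth (x : ℝ) : ℝ := Real.cosh x / Real.sinh x

namespace Real

theorem hasDerivAt_coth {x : ℝ} (hx : x ≠ 0) : HasDerivAt coth (-1 / sinh x ^ 2) x := by
  refine ((hasDerivAt_cosh x).div (hasDerivAt_sinh x) (sinh_ne_zero.mpr hx)).congr_deriv ?_
  rw [← cosh_sq_sub_sinh_sq x]
  ring

theorem tendsto_deriv_coth_add_div {a c : ℝ} (ha : a ≠ 0) (hc : c ≠ 0) :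
    Tendsto (deriv fun y => coth ((y + c) / a)) (𝓝 0) (𝓝 (-1 / sinh (c / a) ^ 2 * (1 / a))) := by
  have hderiv : ∀ᶠ y in 𝓝 (0 : ℝ),
      deriv (fun y => coth ((y + c) / a)) y = -1 / sinh ((y + c) / a) ^ 2 * (1 / a) := by
    have hne : ∀ᶠ y in 𝓝 (0 : ℝ), y + c ≠ 0 :=
      (continuous_id.add continuous_const).continuousAt.eventually_ne (by simpa using hc)
    filter_upwards [hne] with y hy
    have hinner : HasDerivAt (fun y : ℝ => (y + c) / a) (1 / a) y :=
      ((hasDerivAt_id y).add_const c).div_const a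
    exact ((hasDerivAt_coth (div_ne_zero hy ha)).comp y hinner).deriv
  have hcont : ContinuousAt (fun y : ℝ => -1 / sinh ((y + c) / a) ^ 2 * (1 / a)) 0 := by
    have : sinh ((0 + c) / a) ^ 2 ≠ 0 := by simp [ha, hc]
    fun_prop (disch := exact this)
  simpa using (hcont.tendsto.congr' (hderiv.mono fun _ h => h.symm))

end Real

section comp_abs

variable {g : ℝ → ℝ} {L : ℝ}

theorem deriv_comp_abs_of_pos {x : ℝ} (hx : 0 < x) : deriv (fun y => g |y|) x = deriv g x := by
  refine Filter.EventuallyEq.deriv_eq ?_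
  filter_upwards [lt_mem_nhds hx] with y hy
  rw [abs_of_pos hy]

theorem deriv_comp_abs_of_neg {x : ℝ} (hx : x < 0) :
    deriv (fun y => g |y|) x = -deriv g (-x) := by
  rw [← deriv_comp_neg]
  refine Filter.EventuallyEq.deriv_eq ?_
  filter_upwards [gt_mem_nhds hx] with y hy
  rw [abs_of_neg hy]

theorem tendsto_deriv_comp_abs_nhdsGT_s11 (h : Tendsto (deriv g) (𝓝[>] 0) (𝓝 L)) :
    Tendsto (deriv fun y => g |y|) (𝓝[>] 0) (𝓝 L) :=
  h.congr' <| eventually_nhdsWithin_of_forall fun _ hx => (deriv_comp_abs_of_pos hx).symm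

theorem tendsto_deriv_comp_abs_nhdsLT_s11 (h : Tendsto (deriv g) (𝓝[>] 0) (𝓝 L)) :
    Tendsto (deriv fun y => g |y|) (𝓝[<] 0) (𝓝 (-L)) := by
  have hneg : Tendsto (fun x => -deriv g (-x)) (𝓝[<] 0) (𝓝 (-L)) := by
    have hflip := tendsto_neg_nhdsLT (a := (0 : ℝ))
    rw [neg_zero] at hflip
    simpa using (h.comp hflip).neg
  exact hneg.congr' <| eventually_nhdsWithin_of_forall fun _ hx => (deriv_comp_abs_of_neg hx).symm

end comp_abs

open Real

/-- For `γ < 0` and `c_γ = (1/√2) arsinh(-2√2/γ) > 0`, the soliton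
`b̃_γ(x) = coth((|x| + c_γ)/√2)` satisfies the jump condition
`b̃_γ'(0⁺) - b̃_γ'(0⁻) = γ b̃_γ(0)`. -/
theorem b_tilde_gamma_jump (γ : ℝ) (hγ : γ < 0) :
    let cγ : ℝ := (1 / Real.sqrt 2) * Real.arsinh (-(2 * Real.sqrt 2) / γ)
    let b : ℝ → ℝ := fun x => Real.coth ((|x| + cγ) / Real.sqrt 2)
    0 < cγ ∧
    ∃ dp dm : ℝ,
      Tendsto (deriv b) (𝓝[>] (0:ℝ)) (𝓝 dp) ∧
      Tendsto (deriv b) (𝓝[<] (0:ℝ)) (𝓝 dm) ∧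
      dp - dm = γ * b 0 := by
  intro cγ b
  have hs : (0 : ℝ) < √2 := by positivity
  have hc : 0 < cγ :=
    mul_pos (by positivity) (arsinh_pos_iff.mpr (div_pos_of_neg_of_neg (by linarith) hγ))
  set t := cγ / √2 with ht
  have hsinh : γ * (sinh t * cosh t) = -√2 := by
    have h2t : 2 * t = arsinh (-(2 * √2) / γ) := by
      simp only [ht, cγ]; field_simp; rw [sq_sqrt zero_le_two]
    have hprod := congrArg sinh h2t
    rw [sinh_two_mul, sinh_arsinh] at hprod
    field_simp at hprod
    rw [hprod]
    field_simp [hγ.ne]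
  have hderiv := tendsto_deriv_coth_add_div hs.ne' hc.ne'
  refine ⟨hc, _, _, tendsto_deriv_comp_abs_nhdsGT_s11 (hderiv.mono_left nhdsWithin_le_nhds),
    tendsto_deriv_comp_abs_nhdsLT_s11 (hderiv.mono_left nhdsWithin_le_nhds), ?_⟩
  have hst : sinh t ≠ 0 := (sinh_pos_iff.mpr (div_pos hc hs)).ne'
  simp only [b, coth, abs_zero, zero_add, ← ht]
  field_simp
  linear_combination (-√2) * hsinh + mul_self_sqrt zero_le_two
end
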